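/- In the group G_2 = ⟨x, y | x y^{-1} x^{-1} y x = y^{-2} x y x^{-1} y^{-1} x y^2⟩, the relation holds modulo γ_4(G_2) in the form [y,x]^4 = [[x,y],y]^2. Equivalently, the image of the relator in G_2/γ_4(G_2) equals the identity iff [y,x]^4 [[x,y],y]^{-2} = 1 there. -/

import Mathlib

/-! Write `a = x`, `b = y`, `c = [a,b]` and `e = [c,b]`. Conjugating by `b` gives `a^b = a c` and
`c^b = c e`, so the left side of the relator is `a c⁻¹` while the right side is
`a^{b²} c^b = a c² e · c e`. Modulo `γ₄` the element `e ∈ γ₃` commutes with `c`, hence the relation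
reads `a c⁻¹ = a c³ e²`, i.e. `c⁻⁴ = e²`, and `c⁻¹ = [b,a]`. -/

namespace Stmt4

abbrev F := FreeGroup (Fin 2)

def x : F := FreeGroup.of 0
def y : F := FreeGroup.of 1

def R : F :=
  x * y⁻¹ * x⁻¹ * y * x * (y⁻¹ * y⁻¹ * x * y * x⁻¹ * y⁻¹ * x * y * y)⁻¹

abbrev G2 := PresentedGroup ({R} : Set F)

def xg : G2 := PresentedGroup.of 0
def yg : G2 := PresentedGroup.of 1

def comm (a b : G2) : G2 := a⁻¹ * b⁻¹ * a * b

/-- The quotient `G₂ / γ₄(G₂)`. -/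
abbrev Q := G2 ⧸ Subgroup.lowerCentralSeries (⊤ : Subgroup G2) 3

def π : G2 →* Q := QuotientGroup.mk' _

open scoped commutatorElement

theorem inv_pow_four_eq_sq_of_relation {G : Type*} [Group G] {a b c e : G}
    (hc : c = a⁻¹ * b⁻¹ * a * b) (he : e = c⁻¹ * b⁻¹ * c * b) (hce : Commute c e)
    (hrel : a * b⁻¹ * a⁻¹ * b * a = b⁻¹ * b⁻¹ * a * b * a⁻¹ * b⁻¹ * a * b * b) :
    c⁻¹ ^ 4 = e ^ 2 := by
  have hlhs : a * b⁻¹ * a⁻¹ * b * a = a * c⁻¹ := by subst hc; group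
  have hrhs : b⁻¹ * b⁻¹ * a * b * a⁻¹ * b⁻¹ * a * b * b = a * (c * c * e * (c * e)) := by
    subst he hc; group
  have hc_inv : c⁻¹ = c * c * c * (e * e) :=
    calc c⁻¹ = c * c * e * (c * e) := mul_left_cancel (hlhs.symm.trans (hrel.trans hrhs))
      _ = c * c * (e * c) * e := by group
      _ = c * c * (c * e) * e := by rw [hce.eq]
      _ = c * c * c * (e * e) := by group
  calc c⁻¹ ^ 4 = (c * c * c)⁻¹ * c⁻¹ := by group
    _ = e ^ 2 := by rw [hc_inv, inv_mul_cancel_left, sq]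

theorem commutatorElement_mem_lowerCentralSeries_succ {G : Type*} [Group G] {n : ℕ} {g : G}
    (hg : g ∈ (⊤ : Subgroup G).lowerCentralSeries n) (h : G) :
    ⁅g, h⁆ ∈ (⊤ : Subgroup G).lowerCentralSeries (n + 1) :=
  Subgroup.commutator_mem_commutator hg (Subgroup.mem_top h)

theorem commute_mk_of_mem_lowerCentralSeries {G : Type*} [Group G] {n : ℕ} {g : G}
    (hg : g ∈ (⊤ : Subgroup G).lowerCentralSeries n) (h : G) :
    Commute (g : G ⧸ (⊤ : Subgroup G).lowerCentralSeries (n + 1)) h :=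
  commutatorElement_eq_one_iff_commute.mp <|
    (QuotientGroup.eq_one_iff _).mpr (commutatorElement_mem_lowerCentralSeries_succ hg h)

theorem comm_eq_commutatorElement (a b : G2) : comm a b = ⁅a⁻¹, b⁻¹⁆ := by
  rw [comm, commutatorElement_def, inv_inv, inv_inv]

theorem comm_mem_lowerCentralSeries_succ {n : ℕ} {a : G2}
    (ha : a ∈ (⊤ : Subgroup G2).lowerCentralSeries n) (b : G2) :
    comm a b ∈ (⊤ : Subgroup G2).lowerCentralSeries (n + 1) := by
  rw [comm_eq_commutatorElement]
  exact commutatorElement_mem_lowerCentralSeries_succ (inv_mem ha) b⁻¹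

theorem comm_inv (a b : G2) : (comm a b)⁻¹ = comm b a := by
  simp only [comm]; group

theorem relation_xg_yg :
    xg * yg⁻¹ * xg⁻¹ * yg * xg = yg⁻¹ * yg⁻¹ * xg * yg * xg⁻¹ * yg⁻¹ * xg * yg * yg :=
  PresentedGroup.mk_eq_mk_of_mul_inv_mem (Set.mem_singleton R)

theorem relation_mod_gamma4 :
    π (comm yg xg) ^ 4 = π (comm (comm xg yg) yg) ^ 2 := by
  have hc_mem : comm xg yg ∈ (⊤ : Subgroup G2).lowerCentralSeries 1 :=
    comm_mem_lowerCentralSeries_succ (Subgroup.mem_top xg) yg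
  have hce : Commute (π (comm xg yg)) (π (comm (comm xg yg) yg)) :=
    (commute_mk_of_mem_lowerCentralSeries (comm_mem_lowerCentralSeries_succ hc_mem yg) _).symm
  have hrel := congrArg π relation_xg_yg
  simp only [map_mul, map_inv] at hrel
  rw [← comm_inv, map_inv]
  exact inv_pow_four_eq_sq_of_relation (by simp only [comm, map_mul, map_inv])
    (by simp only [comm, map_mul, map_inv]) hce hrel

end Stmt4
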